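/- arXiv:2402.13648 — 4 statements merged into one kernel-verified Lean document; each statement's English description precedes it below -/
import Mathlib

section
/- Let L be a field, D a finite-dimensional L-vector space with an L-linear automorphism Φ and an L-linear endomorphism N satisfying N ∘ Φ = q · Φ ∘ N for some scalar q ∈ L with q ≠ 1 and q ≠ 0. If Φ - id is bijective on D and Φ - q^{-1}·id is bijective on D, then the complex D ⊕ F⁰ → D ⊕ D ⊕ D → D, with first map (u,v) ↦ ((1-Φ)u, Nu, u-v) and second map (w,x,y) ↦ Nw - (1-qΦ)x (where F⁰ ⊆ D is any subspace), has first cohomology group canonically isomorphic to D / F⁰, via [(w,x,y)] ↦ y - (1-Φ)^{-1} w mod F⁰. -/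
/-- For an `(F, 1-T)`-convenient module `D` (i.e. `Φ - 1` and `Φ - q⁻¹` are bijective),
the first cohomology of the complex
`D ⊕ F⁰ → D ⊕ D ⊕ D → D`, `(u,v) ↦ ((1-Φ)u, Nu, u-v)`, `(w,x,y) ↦ Nw - (1-qΦ)x`,
is canonically isomorphic to `D / F⁰` via `[(w,x,y)] ↦ y - (1-Φ)⁻¹w mod F⁰`:
the formula gives a surjection from 1-cocycles to `D/F⁰` whose vanishing locus
is exactly the set of 1-coboundaries. -/
theorem stmt2 {L D : Type*} [Field L] [AddCommGroup D] [Module L D]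
    [FiniteDimensional L D]
    (Φ : Module.End L D) (hΦ : Function.Bijective Φ)
    (N : Module.End L D) (q : L) (hq1 : q ≠ 1) (hq0 : q ≠ 0)
    (hrel : N * Φ = q • (Φ * N))
    (F0 : Submodule L D)
    (hbij1 : Function.Bijective (⇑(Φ - 1 : Module.End L D)))
    (hbij2 : Function.Bijective (⇑(Φ - q⁻¹ • 1 : Module.End L D))) :
    (∀ z : D ⧸ F0, ∃ w x y : D,
        N w - (x - q • Φ x) = 0 ∧
        Submodule.mkQ F0 (y - Ring.inverse (1 - Φ) w) = z) ∧
    (∀ w x y : D, N w - (x - q • Φ x) = 0 →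
        (Submodule.mkQ F0 (y - Ring.inverse (1 - Φ) w) = 0 ↔
          ∃ u : D, ∃ v ∈ F0, w = u - Φ u ∧ x = N u ∧ y = u - v)) := by
  have hU : IsUnit (1 - Φ : Module.End L D) := by
    have h1 : IsUnit (Φ - 1 : Module.End L D) := (Module.End.isUnit_iff _).2 hbij1
    have h2 := h1.neg
    rwa [neg_sub] at h2
  -- Ring.inverse (1-Φ) applied to (1-Φ) u gives u
  have hinv : ∀ u : D, Ring.inverse (1 - Φ : Module.End L D) (u - Φ u) = u := by
    intro u
    have h := Ring.inverse_mul_cancel _ hU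
    have h2 : (Ring.inverse (1 - Φ) * (1 - Φ) : Module.End L D) u = u := by
      rw [h]; rfl
    simpa [Module.End.mul_apply, LinearMap.sub_apply] using h2
  have hinv' : ∀ w : D, (1 - Φ : Module.End L D) (Ring.inverse (1 - Φ : Module.End L D) w) = w := by
    intro w
    have h := Ring.mul_inverse_cancel _ hU
    have h2 : ((1 - Φ) * Ring.inverse (1 - Φ) : Module.End L D) w = w := by
      rw [h]; rfl
    simpa [Module.End.mul_apply] using h2
  have hNΦ : ∀ d : D, N (Φ d) = q • Φ (N d) := by
    intro d
    have := congrArg (fun f : Module.End L D => f d) hrel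
    simpa [Module.End.mul_apply] using this
  have hinj : Function.Injective (fun d : D => d - q • Φ d) := by
    intro a b hab
    have hfact : ∀ d : D, d - q • Φ d = (-q) • ((Φ - q⁻¹ • (1 : Module.End L D)) d) := by
      intro d
      simp [LinearMap.sub_apply, LinearMap.smul_apply, smul_sub, smul_smul,
        mul_inv_cancel₀ hq0]
      abel
    have hab' : a - q • Φ a = b - q • Φ b := hab
    rw [hfact a, hfact b] at hab'
    have := smul_right_injective D (neg_ne_zero.2 hq0) hab'
    exact hbij2.injective this
  constructor
  · intro z
    obtain ⟨y, hy⟩ := Submodule.mkQ_surjective F0 z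
    exact ⟨0, 0, y, by simp, by simpa using hy⟩
  · intro w x y hc
    constructor
    · intro h0
      set u := Ring.inverse (1 - Φ : Module.End L D) w with hu
      have hw : w = u - Φ u := by
        have := hinv' w
        simpa [LinearMap.sub_apply] using this.symm
      have hx : x = N u := by
        apply hinj
        have hNw : N w = N u - q • Φ (N u) := by
          rw [hw, map_sub, hNΦ]
        have hxe : x - q • Φ x = N w := by
          have := sub_eq_zero.mp hc
          exact this.symm
        simp only [hxe, hNw]
      refine ⟨u, u - y, ?_, hw, hx, by abel⟩
      have hmem : y - u ∈ F0 := by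
        rwa [Submodule.mkQ_apply, Submodule.Quotient.mk_eq_zero] at h0
      have := neg_mem hmem
      simpa [neg_sub] using this
    · rintro ⟨u, v, hv, hw, hx, hy⟩
      subst hw hx hy
      rw [hinv u, Submodule.mkQ_apply, Submodule.Quotient.mk_eq_zero]
      have : u - v - u = -v := by abel
      rw [this]
      exact neg_mem hv
end

section
/- Let L be a field, D an L-vector space with a linear endomorphism φ and a linear endomorphism N with Nφ = pφN for a scalar p, and F⁰ ⊆ D' a subspace of another space D' with a linear map D → D' (all as in the semistable complex). For polynomials P_1, P_2 ∈ 1 + T·L[T], the morphism of complexes c_{P_2} from C•_{P_1} to C•_{P_1 P_2} given by (id ⊕ id, P_2(φ) ⊕ id ⊕ id, P_2(pφ)) is a quasi-isomorphism whenever P_2(φ) and P_2(pφ) are bijective on D. -/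
lemma hpow_aux {L D : Type*} [Field L] [AddCommGroup D] [Module L D]
    (φ N : Module.End L D) (p : L) (hrel : N * φ = p • (φ * N)) :
    ∀ n : ℕ, N * φ ^ n = (p • φ) ^ n * N := by
  intro n
  induction n with
  | zero => simp
  | succ n ih =>
    rw [pow_succ', ← mul_assoc, hrel, pow_succ', smul_mul_assoc, mul_assoc, ih,
      ← mul_assoc, smul_mul_assoc, smul_mul_assoc]

lemma hcomm_aux {L D : Type*} [Field L] [AddCommGroup D] [Module L D]
    (φ N : Module.End L D) (p : L) (hrel : N * φ = p • (φ * N)) (Q : Polynomial L) :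
    N * Polynomial.aeval φ Q = Polynomial.aeval (p • φ) Q * N := by
  induction Q using Polynomial.induction_on' with
  | add f g hf hg => simp [map_add, mul_add, add_mul, hf, hg]
  | monomial n a =>
    simp only [Polynomial.aeval_monomial]
    rw [Algebra.algebraMap_eq_smul_one, smul_mul_assoc, one_mul, mul_smul_comm,
      hpow_aux φ N p hrel n, smul_mul_assoc, smul_mul_assoc, one_mul]

/-- Membership in the space of 1-coboundaries of the semistable complex `C•_P(D)`:
`(w, x, y)` is in the range of `d⁰(u,v) = (P(φ)u, Nu, ῡ - v)`. -/
def inB {L D D' : Type*} [Field L] [AddCommGroup D] [Module L D]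
    [AddCommGroup D'] [Module L D'] (φ N : Module.End L D) (ι : D →ₗ[L] D')
    (F0 : Submodule L D') (P : Polynomial L) (w x : D) (y : D') : Prop :=
  ∃ u : D, ∃ v ∈ F0, w = Polynomial.aeval φ P u ∧ x = N u ∧ y = ι u - v

/-- Membership in the space of 1-cocycles of the semistable complex `C•_P(D)`:
`d¹(w, x, y) = Nw - P(pφ)x = 0` (the `y`-component being unconstrained). -/
def inZ {L D : Type*} [Field L] [AddCommGroup D] [Module L D]
    (φ N : Module.End L D) (p : L) (P : Polynomial L) (w x : D) : Prop :=
  N w = Polynomial.aeval (p • φ) P x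

/-- The morphism of complexes `c_{P₂} : C•_{P₁}(D) → C•_{P₁P₂}(D)`, given by the identity in
degree 0, by `P₂(φ) ⊕ id ⊕ id` in degree 1 and by `P₂(pφ)` in degree 2, is a
quasi-isomorphism when `P₂(φ)` and `P₂(pφ)` are bijective on `D`: it induces an equality of
`H⁰`'s, and bijections on `H¹` and `H²`. -/
theorem stmt3 {L D D' : Type*} [Field L] [AddCommGroup D] [Module L D]
    [AddCommGroup D'] [Module L D']
    (φ N : Module.End L D) (p : L) (hrel : N * φ = p • (φ * N))
    (ι : D →ₗ[L] D') (F0 : Submodule L D')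
    (P1 P2 : Polynomial L) (hP1 : P1.coeff 0 = 1) (hP2 : P2.coeff 0 = 1)
    (hbij : Function.Bijective (⇑(Polynomial.aeval φ P2 : Module.End L D)))
    (hbij' : Function.Bijective (⇑(Polynomial.aeval (p • φ) P2 : Module.End L D))) :
    -- isomorphism on H⁰ (the degree-0 map is the identity, so the kernels agree)
    (∀ u : D, (Polynomial.aeval φ P1 u = 0 ∧ N u = 0 ∧ ι u ∈ F0) ↔
        (Polynomial.aeval φ (P1 * P2) u = 0 ∧ N u = 0 ∧ ι u ∈ F0)) ∧
    -- injectivity on H¹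
    (∀ (w x : D) (y : D'), inZ φ N p P1 w x →
        inB φ N ι F0 (P1 * P2) (Polynomial.aeval φ P2 w) x y →
        inB φ N ι F0 P1 w x y) ∧
    -- surjectivity on H¹
    (∀ (w x : D) (y : D'), inZ φ N p (P1 * P2) w x →
        ∃ (w' x' : D) (y' : D'), inZ φ N p P1 w' x' ∧
          inB φ N ι F0 (P1 * P2) (Polynomial.aeval φ P2 w' - w) (x' - x) (y' - y)) ∧
    -- injectivity on H²
    (∀ z : D, (∃ w x : D, Polynomial.aeval (p • φ) P2 z
          = N w - Polynomial.aeval (p • φ) (P1 * P2) x) →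
        ∃ w x : D, z = N w - Polynomial.aeval (p • φ) P1 x) ∧
    -- surjectivity on H²
    (∀ z : D, ∃ z' w x : D, z = Polynomial.aeval (p • φ) P2 z' + N w
        - Polynomial.aeval (p • φ) (P1 * P2) x) := by
  have hcomm : ∀ (Q : Polynomial L) (u : D),
      N (Polynomial.aeval φ Q u) = Polynomial.aeval (p • φ) Q (N u) := by
    intro Q u
    have := hcomm_aux φ N p hrel Q
    exact congrFun (congrArg (⇑) this) u
  have hmul : ∀ u : D, Polynomial.aeval φ (P1 * P2) u
      = Polynomial.aeval φ P2 (Polynomial.aeval φ P1 u) := by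
    intro u
    rw [mul_comm P1 P2, map_mul, Module.End.mul_apply]
  have hmul' : ∀ u : D, Polynomial.aeval (p • φ) (P1 * P2) u
      = Polynomial.aeval (p • φ) P2 (Polynomial.aeval (p • φ) P1 u) := by
    intro u
    rw [mul_comm P1 P2, map_mul, Module.End.mul_apply]
  refine ⟨?_, ?_, ?_, ?_, ?_⟩
  · -- H⁰
    intro u
    constructor
    · rintro ⟨h1, h2, h3⟩
      exact ⟨by rw [hmul, h1, map_zero], h2, h3⟩
    · rintro ⟨h1, h2, h3⟩
      rw [hmul] at h1
      have := hbij.1 (a₁ := Polynomial.aeval φ P1 u) (a₂ := 0) (by rw [h1, map_zero])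
      exact ⟨this, h2, h3⟩
  · -- H¹ injectivity
    rintro w x y hz ⟨u, v, hv, h1, h2, h3⟩
    rw [hmul] at h1
    exact ⟨u, v, hv, hbij.1 h1, h2, h3⟩
  · -- H¹ surjectivity
    intro w x y hz
    obtain ⟨w', hw'⟩ := hbij.2 w
    refine ⟨w', x, y, ?_, 0, 0, F0.zero_mem, by simp [hw'], by simp, by simp⟩
    unfold inZ at hz ⊢
    apply hbij'.1
    rw [← hw'] at hz
    rw [hcomm P2 w'] at hz
    rw [hmul'] at hz
    exact hz
  · -- H² injectivity
    rintro z ⟨w, x, hwx⟩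
    obtain ⟨w', hw'⟩ := hbij.2 w
    refine ⟨w', x, ?_⟩
    apply hbij'.1
    rw [hwx, ← hw', hcomm P2 w', map_sub, hmul']
  · -- H² surjectivity
    intro z
    obtain ⟨z', hz'⟩ := hbij'.2 z
    exact ⟨z', 0, 0, by simp [hz']⟩
end

section
/- Let P, Q ∈ 1 + T·L[T] be polynomials over a field L that splits them, with root multisets {α_i} and {β_j} respectively. Define P*Q ∈ 1 + T·L[T] as the polynomial with root multiset {α_i β_j}. Then for commuting linear operators φ_1 on V_1 and φ_2 on V_2 over L, if P(φ_1) = 0 on V_1 and Q(φ_2) = 0 on V_2, then (P*Q)(φ_1 ⊗ φ_2) = 0 on V_1 ⊗_L V_2. -/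
open TensorProduct

private lemma step1 {R : Type*} [CommRing R] (a c : R) (l : List R) :
    ∃ d : R, (l.map fun t => a + c * t).prod = a * d + c ^ l.length * l.prod := by
  induction l with
  | nil => exact ⟨0, by simp⟩
  | cons b l ih =>
    obtain ⟨d, hd⟩ := ih
    refine ⟨a * d + c ^ l.length * l.prod + c * b * d, ?_⟩
    simp only [List.map_cons, List.prod_cons, hd, List.length_cons]
    ring

private lemma key {R ι κ : Type*} [CommRing R] (f : ι → R) (g : κ → R)
    (as : List ι) (bs : List κ) :
    ∃ u v : R, ((as.product bs).map fun ab => 1 - f ab.1 * g ab.2).prod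
      = (as.map fun a => 1 - f a).prod * u + (bs.map fun b => 1 - g b).prod * v := by
  induction as with
  | nil => exact ⟨1, 0, by simp [List.product]⟩
  | cons a as ih =>
    obtain ⟨u, v, huv⟩ := ih
    obtain ⟨d, hd⟩ := step1 (1 - f a) (f a) (bs.map fun b => 1 - g b)
    rw [List.length_map] at hd
    set B : R := (bs.map fun b => 1 - g b).prod with hB
    have h1 : (bs.map fun b => 1 - f a * g b).prod
        = (1 - f a) * d + f a ^ bs.length * B := by
      rw [← hd, List.map_map]
      congr 1
      refine List.map_congr_left fun b _ => ?_
      simp only [Function.comp_apply]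
      ring
    refine ⟨d * u, (1 - f a) * d * v + f a ^ bs.length * (as.map fun x => 1 - f x).prod * u
      + f a ^ bs.length * B * v, ?_⟩
    have hcons : ((a :: as).product bs) = (bs.map fun b => (a, b)) ++ as.product bs :=
      rfl
    rw [hcons, List.map_append, List.prod_append, List.map_map]
    have h2 : ((fun ab : ι × κ => 1 - f ab.1 * g ab.2) ∘ fun b => (a, b))
        = fun b => 1 - f a * g b := rfl
    rw [h2, h1, huv]
    simp only [List.map_cons, List.prod_cons]
    ring

/-- If `P(T) = ∏ᵢ (1 - αᵢT)` annihilates `φ₁` on `V₁` and `Q(T) = ∏ⱼ (1 - βⱼT)` annihilates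
`φ₂` on `V₂`, then `(P*Q)(T) = ∏_{i,j} (1 - αᵢβⱼT)`, the polynomial whose roots are the
pairwise products of the roots, annihilates `φ₁ ⊗ φ₂` on `V₁ ⊗_L V₂`. -/
theorem stmt5 {L V1 V2 : Type*} [Field L]
    [AddCommGroup V1] [Module L V1] [AddCommGroup V2] [Module L V2]
    (φ1 : Module.End L V1) (φ2 : Module.End L V2)
    (as bs : List L)
    (hP : (as.map fun α => (1 : Module.End L V1) - α • φ1).prod = 0)
    (hQ : (bs.map fun β => (1 : Module.End L V2) - β • φ2).prod = 0) :
    ((as.product bs).map fun ab =>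
        (1 : Module.End L (V1 ⊗[L] V2)) -
          (ab.1 * ab.2) • (TensorProduct.map φ1 φ2)).prod = 0 := by
  set E := Module.End L (V1 ⊗[L] V2)
  set x : E := TensorProduct.map φ1 1 with hx
  set y : E := TensorProduct.map 1 φ2 with hy
  have hxy : x * y = TensorProduct.map φ1 φ2 := by
    rw [hx, hy, ← TensorProduct.map_mul, mul_one, one_mul]
  have hyx : y * x = TensorProduct.map φ1 φ2 := by
    rw [hx, hy, ← TensorProduct.map_mul, mul_one, one_mul]
  have hcomm : ∀ a ∈ ({x, y} : Set E), ∀ b ∈ ({x, y} : Set E), a * b = b * a := by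
    rintro a (rfl | rfl) b (rfl | rfl) <;> simp [hxy, hyx]
  letI : CommRing (Algebra.adjoin L ({x, y} : Set E)) :=
    Algebra.adjoinCommRingOfComm L hcomm
  have hxA : x ∈ Algebra.adjoin L ({x, y} : Set E) := Algebra.subset_adjoin (by simp)
  have hyA : y ∈ Algebra.adjoin L ({x, y} : Set E) := Algebra.subset_adjoin (by simp)
  let A : Type _ := Algebra.adjoin L ({x, y} : Set E)
  let x' : A := ⟨x, hxA⟩
  let y' : A := ⟨y, hyA⟩
  obtain ⟨u, v, huv⟩ := key (fun a : L => a • x') (fun b : L => b • y') as bs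
  have coeadd : ∀ z w : A, ((z + w : A) : E) = (z : E) + (w : E) := fun _ _ => rfl
  have coemul : ∀ z w : A, ((z * w : A) : E) = (z : E) * (w : E) := fun _ _ => rfl
  have coeprod : ∀ l : List A, ((l.prod : A) : E) = (l.map fun z : A => (z : E)).prod := by
    intro l
    induction l with
    | nil => rfl
    | cons a l ih =>
      rw [List.prod_cons, List.map_cons, List.prod_cons, ← ih]
      exact coemul a l.prod
  have happ := congrArg (Subtype.val : A → E) huv
  simp only [coeadd, coemul, coeprod, List.map_map] at happ
  have e1 : ((fun z : A => (z : E)) ∘ fun ab : L × L => 1 - (ab.1 • x') * (ab.2 • y'))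
      = fun ab : L × L => (1 : E) - (ab.1 * ab.2) • (TensorProduct.map φ1 φ2) := by
    funext ab
    have h : ((fun z : A => (z : E)) ∘ fun ab : L × L => 1 - (ab.1 • x') * (ab.2 • y')) ab
        = (1 : E) - (ab.1 • x) * (ab.2 • y) := rfl
    rw [h, smul_mul_smul_comm, hxy]
  have e2 : ((fun z : A => (z : E)) ∘ fun a : L => 1 - a • x')
      = fun a : L => (1 : E) - a • x := by
    funext a; rfl
  have e3 : ((fun z : A => (z : E)) ∘ fun b : L => 1 - b • y')
      = fun b : L => (1 : E) - b • y := by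
    funext b; rfl
  rw [e1, e2, e3] at happ
  -- the two factors vanish
  have hP' : (as.map fun a : L => (1 : E) - a • x).prod = 0 := by
    let h1 : Module.End L V1 →ₐ[L] E :=
      AlgHom.ofLinearMap
        { toFun := fun f => TensorProduct.map f (1 : Module.End L V2)
          map_add' := fun f g => TensorProduct.map_add_left f g 1
          map_smul' := fun c f => TensorProduct.map_smul_left c f 1 }
        TensorProduct.map_one
        (fun f g => by
          simp only [LinearMap.coe_mk, AddHom.coe_mk]
          rw [← TensorProduct.map_mul, mul_one])
    have h1s : ∀ c : L, ∀ f, h1 (c • f) = c • h1 f := fun c f => map_smul h1 c f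
    calc (as.map fun a : L => (1 : E) - a • x).prod
        = h1 ((as.map fun α => (1 : Module.End L V1) - α • φ1).prod) := by
          rw [map_list_prod, List.map_map]
          congr 1
          refine (List.map_congr_left fun a _ => ?_).symm
          simp only [Function.comp_apply, map_sub, map_one, h1s]
          rfl
      _ = 0 := by rw [hP, map_zero]
  have hQ' : (bs.map fun b : L => (1 : E) - b • y).prod = 0 := by
    let h2 : Module.End L V2 →ₐ[L] E :=
      AlgHom.ofLinearMap
        { toFun := fun g => TensorProduct.map (1 : Module.End L V1) g
          map_add' := fun f g => TensorProduct.map_add_right 1 f g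
          map_smul' := fun c f => TensorProduct.map_smul_right c 1 f }
        TensorProduct.map_one
        (fun f g => by
          simp only [LinearMap.coe_mk, AddHom.coe_mk]
          rw [← TensorProduct.map_mul, mul_one])
    have h2s : ∀ c : L, ∀ f, h2 (c • f) = c • h2 f := fun c f => map_smul h2 c f
    calc (bs.map fun b : L => (1 : E) - b • y).prod
        = h2 ((bs.map fun β => (1 : Module.End L V2) - β • φ2).prod) := by
          rw [map_list_prod, List.map_map]
          congr 1
          refine (List.map_congr_left fun b _ => ?_).symm
          simp only [Function.comp_apply, map_sub, map_one, h2s]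
          rfl
      _ = 0 := by rw [hQ, map_zero]
  rw [happ, hP', hQ', zero_mul, zero_mul, add_zero]
end

section
/- Let L be a field and P, Q ∈ 1 + T·L[T]. Then there exist polynomials a(X,Y), b(X,Y) ∈ L[X,Y] such that (P*Q)(XY) = a(X,Y)·P(X) + b(X,Y)·Q(Y) in L[X,Y], where P*Q is the polynomial whose roots are the pairwise products of roots of P and Q. -/
open MvPolynomial

private lemma key_inner {ι R : Type*} [CommRing R] (f : R) (g u : ι → R)
    (hu : ∀ i, ∃ c d, u i = c * f + d * g i) :
    ∀ l : List ι, ∃ c d, (l.map u).prod = c * f + d * (l.map g).prod := by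
  intro l
  induction l with
  | nil => exact ⟨0, 1, by simp⟩
  | cons i t ih =>
    obtain ⟨c, d, hcd⟩ := hu i
    obtain ⟨c', d', h'⟩ := ih
    refine ⟨c * (t.map u).prod + d * g i * c', d * d', ?_⟩
    simp only [List.map_cons, List.prod_cons, hcd]
    rw [h']; ring

private lemma key_outer {ι R : Type*} [CommRing R] (f v : ι → R) (G : R)
    (hv : ∀ i, ∃ c d, v i = c * f i + d * G) :
    ∀ l : List ι, ∃ c d, (l.map v).prod = c * (l.map f).prod + d * G := by
  intro l
  induction l with
  | nil => exact ⟨1, 0, by simp⟩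
  | cons i t ih =>
    obtain ⟨c, d, hcd⟩ := hv i
    obtain ⟨c', d', h'⟩ := ih
    refine ⟨c * c', c * (f i) * d' + d * ((t.map v).prod), ?_⟩
    simp only [List.map_cons, List.prod_cons, hcd]
    rw [h']; ring

private lemma prod_product {α β R : Type*} [CommMonoid R] (u : α × β → R) :
    ∀ (as : List α) (bs : List β),
      ((as.product bs).map u).prod
        = (as.map fun a => (bs.map fun b => u (a, b)).prod).prod := by
  intro as bs
  induction as with
  | nil => simp [List.product]
  | cons a t ih =>
    have h : (a :: t).product bs = bs.map (a, ·) ++ t.product bs := by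
      simp [List.product]
    rw [h, List.map_append, List.prod_append, ih, List.map_cons, List.prod_cons,
      List.map_map]
    rfl

/-- For `P(T) = ∏ᵢ (1 - αᵢT)` and `Q(T) = ∏ⱼ (1 - βⱼT)` in `1 + T·L[T]` (written over a
field where they split), the polynomial `(P*Q)(T) = ∏_{i,j} (1 - αᵢβⱼT)` satisfies
`(P*Q)(XY) = a(X,Y)·P(X) + b(X,Y)·Q(Y)` for suitable two-variable polynomials `a, b`. -/
theorem stmt6 {L : Type*} [Field L] (as bs : List L) :
    ∃ a b : MvPolynomial (Fin 2) L,
      Polynomial.aeval (X 0 * X 1 : MvPolynomial (Fin 2) L)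
          ((as.product bs).map fun ab =>
            (1 : Polynomial L) - Polynomial.C (ab.1 * ab.2) * Polynomial.X).prod =
        a * Polynomial.aeval (X 0 : MvPolynomial (Fin 2) L)
              (as.map fun α => (1 : Polynomial L) - Polynomial.C α * Polynomial.X).prod +
          b * Polynomial.aeval (X 1 : MvPolynomial (Fin 2) L)
              (bs.map fun β => (1 : Polynomial L) - Polynomial.C β * Polynomial.X).prod := by
  set R := MvPolynomial (Fin 2) L
  set u : L × L → R := fun ab => 1 - C (ab.1 * ab.2) * (X 0 * X 1) with hu
  set f : L → R := fun α => 1 - C α * X 0 with hf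
  set g : L → R := fun β => 1 - C β * X 1 with hg
  -- rewrite the three aeval expressions as products in R
  have e1 : Polynomial.aeval (X 0 * X 1 : R)
      ((as.product bs).map fun ab =>
        (1 : Polynomial L) - Polynomial.C (ab.1 * ab.2) * Polynomial.X).prod
      = ((as.product bs).map u).prod := by
    rw [map_list_prod, List.map_map]
    refine congrArg List.prod (List.map_congr_left fun ab _ => ?_)
    simp [hu, algebraMap_eq, MvPolynomial.C_mul]
    left; rfl
  have e2 : Polynomial.aeval (X 0 : R)
      (as.map fun α => (1 : Polynomial L) - Polynomial.C α * Polynomial.X).prod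
      = (as.map f).prod := by
    rw [map_list_prod, List.map_map]
    refine congrArg List.prod (List.map_congr_left fun α _ => ?_)
    simp [hf, algebraMap_eq]
  have e3 : Polynomial.aeval (X 1 : R)
      (bs.map fun β => (1 : Polynomial L) - Polynomial.C β * Polynomial.X).prod
      = (bs.map g).prod := by
    rw [map_list_prod, List.map_map]
    refine congrArg List.prod (List.map_congr_left fun β _ => ?_)
    simp [hg, algebraMap_eq]
  rw [e1, e2, e3, prod_product]
  -- inner step: for each α, the β-product lies in (f α, Q)
  have inner : ∀ α : L, ∃ c d : R,
      (bs.map fun β => u (α, β)).prod = c * f α + d * (bs.map g).prod := by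
    intro α
    refine key_inner (f α) g (fun β => u (α, β)) (fun β => ⟨1, C α * X 0, ?_⟩) bs
    simp only [hu, hf, hg, map_mul]
    ring
  -- outer step
  obtain ⟨c, d, hcd⟩ := key_outer f (fun α => (bs.map fun β => u (α, β)).prod)
    ((bs.map g).prod) inner as
  exact ⟨c, d, hcd⟩
end
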